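/- Every A-lattice Λ of rank r in L is ultimately quasi-periodic with quasi-period 1 (the degree of the infinite place of 𝔽_q(T)): there exists N₀ ∈ ℚ such that for every rational x > N₀, #{λ ∈ Λ : log λ = x + 1} = q^r · #{λ ∈ Λ : log λ = x}. -/

import Mathlib

/-
Multiplication by `T` raises the size of a lattice vector by a factor `q`, and the `q^r` vectors
`∑ cᵢ bᵢ` with constant coefficients `cᵢ ∈ 𝔽_q` on a basis `b` are bounded in size. Writing each
coordinate as `a = T·(a div T) + a(0)` shows that every `μ ∈ Λ` is uniquely `T·λ + ∑ cᵢ bᵢ`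
with `λ ∈ Λ`, `c ∈ 𝔽_q^r`; once `|μ|` exceeds the bound, the ultrametric inequality gives
`|μ| = q·|λ|`, so this decomposition matches the vectors of size `q^(x+1)` with the pairs
(`c`, vector of size `q^x`).
-/

open scoped Classical

noncomputable section

variable {Fq : Type*} [Field Fq] [Fintype Fq]
variable {L : Type*} [NormedField L] [CompleteSpace L]
variable [Algebra (Polynomial Fq) L]

/-- `log_q |z|`. -/
def logq (q : ℕ) (z : L) : ℝ := Real.logb q ‖z‖

/-- An `A = 𝔽_q[T]`-lattice of rank `r` in `L`: a finitely generated `A`-submodule which is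
free of rank `r` (equivalently: its `𝔽_q(T)`-span has dimension `r`), and which is
discrete in `L` (finite intersection with every bounded ball). -/
def IsLatticeOfRank (r : ℕ) (Λ : Submodule (Polynomial Fq) L) : Prop :=
  (∃ b : Fin r → L, LinearIndependent (Polynomial Fq) b ∧
      Submodule.span (Polynomial Fq) (Set.range b) = Λ) ∧
  ∀ B : ℝ, {x : L | x ∈ Λ ∧ ‖x‖ ≤ B}.Finite

/-- Membership in `K·Λ`, the `K = 𝔽_q(T)`-span of `Λ` in `L`. -/
def InKSpan (Λ : Submodule (Polynomial Fq) L) (u : L) : Prop :=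
  ∃ n : Polynomial Fq, n ≠ 0 ∧ n • u ∈ Λ

/-- The exponential function of the lattice `Λ`: `e^Λ(z) = z·∏_{0≠λ∈Λ} (1 - z/λ)`. -/
def latExp (Λ : Submodule (Polynomial Fq) L) (z : L) : L :=
  z * ∏' l : {x : L // x ∈ Λ ∧ x ≠ 0}, (1 - z / (l : L))

open Polynomial

theorem Polynomial.bijective_X_mul_add_C {R : Type*} [Ring R] :
    Function.Bijective fun p : R × R[X] => X * p.2 + C p.1 := by
  refine ⟨fun ⟨c, a⟩ ⟨c', a'⟩ h => ?_, fun p => ⟨(p.coeff 0, p.divX), X_mul_divX_add p⟩⟩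
  have hc : c = c' := by simpa using congrArg (coeff · 0) h
  subst hc
  exact Prod.ext rfl (isRegular_X.left (add_right_cancel h))

theorem Module.Basis.bijective_X_smul_add_sum_C_smul {R M ι : Type*} [CommRing R]
    [AddCommGroup M] [Module R[X] M] [Fintype ι] (B : Module.Basis ι R[X] M) :
    Function.Bijective fun p : (ι → R) × M => (X : R[X]) • p.2 + ∑ i, C (p.1 i) • B i := by
  have hcoord : (B.equivFun ∘ fun p : (ι → R) × M => (X : R[X]) • p.2 + ∑ i, C (p.1 i) • B i) =
      (Pi.map fun _ p => X * p.2 + C p.1) ∘ (Equiv.arrowProdEquivProdArrow ι _ _).symm ∘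
        Prod.map id B.equivFun := by
    ext1 p; ext1 j
    simp [Finsupp.single_apply]
  rw [← B.equivFun.bijective.of_comp_iff', hcoord]
  exact (Function.Bijective.piMap fun _ => bijective_X_mul_add_C).comp
    ((Equiv.bijective _).comp (Function.bijective_id.prodMap B.equivFun.bijective))

theorem Nat.card_eq_mul_card_of_bijective {α β γ : Type*} {f : α × β → γ}
    (hf : Function.Bijective f) {S : Set β} {T : Set γ} (h : ∀ a b, f (a, b) ∈ T ↔ b ∈ S) :
    Nat.card T = Nat.card α * Nat.card S := by
  have hpre : f ⁻¹' T = Set.univ ×ˢ S := by ext ⟨a, b⟩; simp [h]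
  rw [← Nat.card_univ (α := α), ← Nat.card_prod, ← Nat.card_congr (Equiv.Set.prod _ _), ← hpre]
  exact Nat.card_congr ((Equiv.ofBijective f hf).subtypeEquiv fun _ => Iff.rfl).symm

theorem IsUltrametricDist.norm_add_eq_of_norm_lt {E : Type*} [SeminormedAddCommGroup E]
    [IsUltrametricDist E] {x y : E} (h : ‖y‖ < ‖x‖) : ‖x + y‖ = ‖x‖ := by
  rw [norm_add_eq_max_of_norm_ne_norm h.ne', max_eq_left h.le]

theorem IsUltrametricDist.norm_add_eq_iff_of_norm_lt {E : Type*} [SeminormedAddCommGroup E]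
    [IsUltrametricDist E] {x y : E} {t : ℝ} (hy : ‖y‖ < t) : ‖x + y‖ = t ↔ ‖x‖ = t := by
  constructor
  · intro h
    rw [← add_neg_cancel_right x y, norm_add_eq_of_norm_lt (by rwa [norm_neg, h]), h]
  · intro h
    rw [norm_add_eq_of_norm_lt (by rwa [h]), h]

theorem Submodule.nat_card_setOf_mem_and {R E : Type*} [Semiring R] [AddCommMonoid E]
    [Module R E] (Λ : Submodule R E) (P : E → Prop) :
    Nat.card {l : E | l ∈ Λ ∧ P l} = Nat.card {m : Λ | P m} :=
  Nat.card_congr (Equiv.subtypeSubtypeEquivSubtypeInter (· ∈ Λ) P).symm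

theorem Module.Basis.card_norm_eq_mul_card_norm_eq {R E ι : Type*} [CommRing R] [Fintype R]
    [SeminormedAddCommGroup E] [IsUltrametricDist E] [Module R[X] E] [Fintype ι]
    {Λ : Submodule R[X] E} (B : Module.Basis ι R[X] Λ) {q t : ℝ} (hq : q ≠ 0)
    (hX : ∀ z : E, ‖(X : R[X]) • z‖ = q * ‖z‖)
    (hB : ∀ c : ι → R, ‖∑ i, C (c i) • (B i : E)‖ < q * t) :
    Nat.card {l : E | l ∈ Λ ∧ ‖l‖ = q * t} =
      Fintype.card R ^ Fintype.card ι * Nat.card {l : E | l ∈ Λ ∧ ‖l‖ = t} := by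
  rw [Λ.nat_card_setOf_mem_and, Λ.nat_card_setOf_mem_and, ← Fintype.card_fun,
    ← Nat.card_eq_fintype_card]
  refine Nat.card_eq_mul_card_of_bijective B.bijective_X_smul_add_sum_C_smul fun c m => ?_
  simp only [Set.mem_ofPred_eq, Submodule.coe_add, Submodule.coe_smul, Submodule.coe_sum]
  rw [IsUltrametricDist.norm_add_eq_iff_of_norm_lt (hB c), hX, mul_right_inj' hq]

section NormOfAlgebraMap

variable {R E : Type*} [CommRing R] [NormedRing E] [NormMulClass E] [Algebra R[X] E] {q : ℝ}

theorem norm_X_smul_of_norm_algebraMap [Nontrivial R]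
    (hA : ∀ a : R[X], a ≠ 0 → ‖algebraMap R[X] E a‖ = q ^ a.natDegree) (z : E) :
    ‖(X : R[X]) • z‖ = q * ‖z‖ := by
  rw [Algebra.smul_def, norm_mul, hA X X_ne_zero, natDegree_X, pow_one]

theorem norm_sum_C_smul_le_of_norm_algebraMap
    (hA : ∀ a : R[X], a ≠ 0 → ‖algebraMap R[X] E a‖ = q ^ a.natDegree)
    {ι : Type*} [Fintype ι] (b : ι → E) (c : ι → R) :
    ‖∑ i, C (c i) • b i‖ ≤ ∑ i, ‖b i‖ := by
  refine (norm_sum_le _ _).trans (Finset.sum_le_sum fun i _ => ?_)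
  rcases eq_or_ne (c i) 0 with h | h
  · simp [h]
  · rw [Algebra.smul_def, norm_mul, hA _ (C_ne_zero.mpr h), natDegree_C, pow_zero, one_mul]

end NormOfAlgebraMap

theorem ne_zero_and_logq_eq_iff {E : Type*} [NormedField E] {q : ℕ} (hq : 1 < q) {z : E}
    {y : ℝ} : z ≠ 0 ∧ logq q z = y ↔ ‖z‖ = (q : ℝ) ^ y := by
  have hq' : (1 : ℝ) < q := by exact_mod_cast hq
  constructor
  · rintro ⟨hz, rfl⟩
    exact (Real.rpow_logb (by positivity) hq'.ne' (norm_pos_iff.mpr hz)).symm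
  · intro h
    refine ⟨norm_pos_iff.mp (h ▸ by positivity), ?_⟩
    rw [logq, h, Real.logb_rpow (by positivity) hq'.ne']

theorem statement9_general
    (q : ℕ) (hq : Fintype.card Fq = q)
    (hna : ∀ x y : L, ‖x + y‖ ≤ max ‖x‖ ‖y‖)
    (hA : ∀ a : Polynomial Fq, a ≠ 0 →
      ‖algebraMap (Polynomial Fq) L a‖ = (q : ℝ) ^ a.natDegree)
    (r : ℕ)
    (Λ : Submodule (Polynomial Fq) L) (hΛ : IsLatticeOfRank r Λ) :
    ∃ N₀ : ℚ, ∀ x : ℚ, N₀ < x →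
      Nat.card {l : L | l ∈ Λ ∧ l ≠ 0 ∧ logq q l = ((x : ℝ) + 1)} =
        q ^ r * Nat.card {l : L | l ∈ Λ ∧ l ≠ 0 ∧ logq q l = (x : ℝ)} := by
  have : IsUltrametricDist L := .isUltrametricDist_of_forall_norm_add_le_max_norm hna
  obtain ⟨⟨b, hb_li, hb_span⟩, -⟩ := hΛ
  let B := (Module.Basis.span hb_li).map (LinearEquiv.ofEq _ _ hb_span)
  have hB : ∀ i, (B i : L) = b i := by simp [B]
  have h1q : 1 < q := hq ▸ Fintype.one_lt_card
  have h1q' : (1 : ℝ) < q := by exact_mod_cast h1q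
  obtain ⟨n, hn⟩ := pow_unbounded_of_one_lt (∑ i, ‖b i‖) h1q'
  refine ⟨n, fun x hx => ?_⟩
  have hsmall : ∀ c : Fin r → Fq, ‖∑ i, C (c i) • (B i : L)‖ < q * (q : ℝ) ^ (x : ℝ) := by
    intro c
    calc ‖∑ i, C (c i) • (B i : L)‖ ≤ ∑ i, ‖b i‖ := by
          simpa only [hB] using norm_sum_C_smul_le_of_norm_algebraMap hA b c
      _ < (q : ℝ) ^ (n : ℝ) := by rwa [Real.rpow_natCast]
      _ < (q : ℝ) ^ (x : ℝ) := Real.rpow_lt_rpow_of_exponent_lt h1q' (by exact_mod_cast hx)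
      _ < q * (q : ℝ) ^ (x : ℝ) := lt_mul_of_one_lt_left (by positivity) h1q'
  simp_rw [ne_zero_and_logq_eq_iff h1q]
  rw [Real.rpow_add_one (by positivity), mul_comm,
    B.card_norm_eq_mul_card_norm_eq (by positivity) (norm_X_smul_of_norm_algebraMap hA) hsmall,
    hq, Fintype.card_fin]

/-- Every lattice of rank `r` is ultimately quasi-periodic with
quasi-period `1`: for all sufficiently large rational `x`,
`#{λ ∈ Λ : log λ = x + 1} = q^r · #{λ ∈ Λ : log λ = x}`. -/
theorem statement9
    (q : ℕ) (hq : Fintype.card Fq = q)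
    (hna : ∀ x y : L, ‖x + y‖ ≤ max ‖x‖ ‖y‖)
    (hA : ∀ a : Polynomial Fq, a ≠ 0 →
      ‖algebraMap (Polynomial Fq) L a‖ = (q : ℝ) ^ a.natDegree)
    (hval : ∀ x : L, x ≠ 0 → ∃ s : ℚ, ‖x‖ = (q : ℝ) ^ (s : ℝ))
    (r : ℕ)
    (Λ : Submodule (Polynomial Fq) L) (hΛ : IsLatticeOfRank r Λ) :
    ∃ N₀ : ℚ, ∀ x : ℚ, N₀ < x →
      Nat.card {l : L | l ∈ Λ ∧ l ≠ 0 ∧ logq q l = ((x : ℝ) + 1)} =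
        q ^ r * Nat.card {l : L | l ∈ Λ ∧ l ≠ 0 ∧ logq q l = (x : ℝ)} :=
  statement9_general q hq hna hA r Λ hΛ
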